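/- arXiv:2509.08284 — 3 statements merged into one kernel-verified Lean document; each statement's English description precedes it below -/
import Mathlib

section
/- For vectors a₁, a₂ ∈ ℝ³ with |a₁| ≤ 1 and |a₂| ≤ 1, the pair of unbiased qubit observables A^{a₁}(±) = (1 ± a₁·σ)/2 and A^{a₂}(±) = (1 ± a₂·σ)/2 admits a joint POVM (i.e., a POVM G on {+,-}×{+,-} with G(x,+)+G(x,-) = A^{a₁}(x) and G(+,y)+G(-,y) = A^{a₂}(y)) if |a₁ + a₂| + |a₁ - a₂| ≤ 2. -/
/-! Since `(b·σ)² = ‖b‖² 𝟙`, the Hermitian matrix `‖b‖ 𝟙 + b·σ` is a positive multiple of its own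
square, so `c 𝟙 + b·σ` is positive semidefinite whenever `‖b‖ ≤ c`. The joint observable
`G(x, y) = ¼ ((1 + x y α) 𝟙 + (x a₁ + y a₂)·σ)` has marginals `A^{a₁}` and `A^{a₂}` for every `α`;
for `α = ‖a₁ + a₂‖ - 1` its positivity condition `‖x a₁ + y a₂‖ ≤ 1 + x y α` is trivial when
`x y = 1` and is the hypothesis `‖a₁ - a₂‖ ≤ 2 - ‖a₁ + a₂‖` when `x y = -1`. -/

open Matrix ComplexOrder

noncomputable def σx : Matrix (Fin 2) (Fin 2) ℂ := !![0, 1; 1, 0]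
noncomputable def σy : Matrix (Fin 2) (Fin 2) ℂ := !![0, -Complex.I; Complex.I, 0]
noncomputable def σz : Matrix (Fin 2) (Fin 2) ℂ := !![1, 0; 0, -1]

/-- `a · σ` for a Bloch vector `a ∈ ℝ³`. -/
noncomputable def dotSigma (a : EuclideanSpace ℝ (Fin 3)) : Matrix (Fin 2) (Fin 2) ℂ :=
  (a 0 : ℂ) • σx + (a 1 : ℂ) • σy + (a 2 : ℂ) • σz

/-- The unbiased qubit observable `A^a(±) = (𝟙 ± a·σ)/2`. -/
noncomputable def ubObs (a : EuclideanSpace ℝ (Fin 3)) : Bool → Matrix (Fin 2) (Fin 2) ℂ :=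
  fun b => (1/2 : ℂ) • ((1 : Matrix (Fin 2) (Fin 2) ℂ) + (if b then (1:ℂ) else -1) • dotSigma a)

lemma dotSigma_add (a b : EuclideanSpace ℝ (Fin 3)) :
    dotSigma (a + b) = dotSigma a + dotSigma b := by
  simp only [dotSigma, PiLp.add_apply, Complex.ofReal_add, add_smul]
  abel

lemma dotSigma_smul (r : ℝ) (a : EuclideanSpace ℝ (Fin 3)) :
    dotSigma (r • a) = (r : ℂ) • dotSigma a := by
  simp only [dotSigma, PiLp.smul_apply, smul_eq_mul, Complex.ofReal_mul, mul_smul, smul_add]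

lemma isHermitian_dotSigma (a : EuclideanSpace ℝ (Fin 3)) : (dotSigma a).IsHermitian := by
  ext i j
  fin_cases i <;> fin_cases j <;> simp [dotSigma, σx, σy, σz]

lemma dotSigma_mul_self (a : EuclideanSpace ℝ (Fin 3)) :
    dotSigma a * dotSigma a = ((‖a‖ ^ 2 : ℝ) : ℂ) • 1 := by
  rw [EuclideanSpace.real_norm_sq_eq, Fin.sum_univ_three]
  ext i j
  fin_cases i <;> fin_cases j <;>
    simp [dotSigma, σx, σy, σz, Matrix.mul_apply, Fin.sum_univ_two] <;> ring_nf <;>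
    simp [Complex.I_sq]

lemma posSemidef_norm_smul_one_add_dotSigma (a : EuclideanSpace ℝ (Fin 3)) :
    ((‖a‖ : ℂ) • 1 + dotSigma a).PosSemidef := by
  rcases (norm_nonneg a).eq_or_lt with ha | ha
  · rw [eq_comm, norm_eq_zero] at ha
    subst ha
    simpa [dotSigma] using PosSemidef.zero
  set P := (‖a‖ : ℂ) • 1 + dotSigma a
  have hP : P.IsHermitian :=
    (isHermitian_one.smul (Complex.conj_ofReal _)).add (isHermitian_dotSigma a)
  have hsq : Pᴴ * P = (2 * ‖a‖ : ℂ) • P := by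
    rw [hP.eq]
    simp only [P, add_mul, mul_add, dotSigma_mul_self, smul_mul_assoc, mul_smul_comm, one_mul,
      mul_one]
    push_cast
    module
  have hP_eq : P = (2 * ‖a‖ : ℂ)⁻¹ • (Pᴴ * P) := by
    rw [hsq, smul_smul, inv_mul_cancel₀ (mul_ne_zero two_ne_zero (by exact_mod_cast ha.ne')),
      one_smul]
  rw [hP_eq]
  exact (posSemidef_conjTranspose_mul_self P).smul (by positivity)

lemma posSemidef_smul_one_add_dotSigma {c : ℝ} {a : EuclideanSpace ℝ (Fin 3)} (h : ‖a‖ ≤ c) :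
    ((c : ℂ) • 1 + dotSigma a).PosSemidef := by
  have hsplit : (c : ℂ) • 1 + dotSigma a =
      ((c - ‖a‖ : ℝ) : ℂ) • 1 + ((‖a‖ : ℂ) • 1 + dotSigma a) := by
    push_cast; module
  rw [hsplit]
  exact (PosSemidef.one.smul (by exact_mod_cast sub_nonneg.2 h)).add
    (posSemidef_norm_smul_one_add_dotSigma a)

def boolSign (b : Bool) : ℝ := if b then 1 else -1

@[simp] lemma boolSign_true : boolSign true = 1 := rfl

@[simp] lemma boolSign_false : boolSign false = -1 := rfl

lemma ubObs_eq (a : EuclideanSpace ℝ (Fin 3)) (x : Bool) :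
    ubObs a x = ((1 / 2 : ℝ) : ℂ) • 1 + dotSigma ((boolSign x / 2) • a) := by
  cases x <;>
    simp only [ubObs, boolSign_true, boolSign_false, dotSigma_smul, if_true, Bool.false_eq_true,
      if_false] <;> push_cast <;> module

lemma ubObs_true_add_ubObs_false (a : EuclideanSpace ℝ (Fin 3)) :
    ubObs a true + ubObs a false = 1 := by
  simp only [ubObs, if_true, Bool.false_eq_true, if_false]
  module

noncomputable def jointObs (a₁ a₂ : EuclideanSpace ℝ (Fin 3)) (x y : Bool) :
    Matrix (Fin 2) (Fin 2) ℂ :=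
  (((1 + boolSign x * boolSign y * (‖a₁ + a₂‖ - 1)) / 4 : ℝ) : ℂ) • 1 +
    dotSigma ((boolSign x / 4) • a₁ + (boolSign y / 4) • a₂)

lemma jointObs_marginal_left (a₁ a₂ : EuclideanSpace ℝ (Fin 3)) (x : Bool) :
    jointObs a₁ a₂ x true + jointObs a₁ a₂ x false = ubObs a₁ x := by
  rw [ubObs_eq, jointObs, jointObs, add_add_add_comm, ← add_smul, ← dotSigma_add]
  congr 3
  · simp only [boolSign_true, boolSign_false]; push_cast; ring
  · simp only [boolSign_true, boolSign_false]; module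

lemma jointObs_marginal_right (a₁ a₂ : EuclideanSpace ℝ (Fin 3)) (y : Bool) :
    jointObs a₁ a₂ true y + jointObs a₁ a₂ false y = ubObs a₂ y := by
  rw [ubObs_eq, jointObs, jointObs, add_add_add_comm, ← add_smul, ← dotSigma_add]
  congr 3
  · simp only [boolSign_true, boolSign_false]; push_cast; ring
  · simp only [boolSign_true, boolSign_false]; module

lemma posSemidef_jointObs {a₁ a₂ : EuclideanSpace ℝ (Fin 3)} (h : ‖a₁ + a₂‖ + ‖a₁ - a₂‖ ≤ 2)
    (x y : Bool) : (jointObs a₁ a₂ x y).PosSemidef := by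
  apply posSemidef_smul_one_add_dotSigma
  have hsign : ‖boolSign x • a₁ + boolSign y • a₂‖ ≤
      1 + boolSign x * boolSign y * (‖a₁ + a₂‖ - 1) := by
    cases x <;> cases y <;>
      simp only [boolSign_true, boolSign_false, one_smul, neg_smul, ← sub_eq_add_neg,
        ← neg_add', norm_neg, neg_add_eq_sub, norm_sub_rev a₂] <;> linarith
  calc ‖(boolSign x / 4) • a₁ + (boolSign y / 4) • a₂‖
      = ‖(1 / 4 : ℝ) • (boolSign x • a₁ + boolSign y • a₂)‖ := by congr 1; module
    _ = ‖boolSign x • a₁ + boolSign y • a₂‖ / 4 := by rw [norm_smul]; norm_num; ring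
    _ ≤ _ := by linarith

theorem stmt0_general (a₁ a₂ : EuclideanSpace ℝ (Fin 3))
    (h : ‖a₁ + a₂‖ + ‖a₁ - a₂‖ ≤ 2) :
    ∃ G : Bool → Bool → Matrix (Fin 2) (Fin 2) ℂ,
      (∀ x y, (G x y).PosSemidef) ∧
      (∑ x : Bool, ∑ y : Bool, G x y) = 1 ∧
      (∀ x, G x true + G x false = ubObs a₁ x) ∧
      (∀ y, G true y + G false y = ubObs a₂ y) := by
  refine ⟨jointObs a₁ a₂, posSemidef_jointObs h, ?_, jointObs_marginal_left a₁ a₂,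
    jointObs_marginal_right a₁ a₂⟩
  simp only [Fintype.sum_bool, jointObs_marginal_left, ubObs_true_add_ubObs_false]

/-- If `|a₁ + a₂| + |a₁ − a₂| ≤ 2` then the pair of unbiased qubit observables
`A^{a₁}, A^{a₂}` admits a joint POVM. -/
theorem stmt0 (a₁ a₂ : EuclideanSpace ℝ (Fin 3)) (h₁ : ‖a₁‖ ≤ 1) (h₂ : ‖a₂‖ ≤ 1)
    (h : ‖a₁ + a₂‖ + ‖a₁ - a₂‖ ≤ 2) :
    ∃ G : Bool → Bool → Matrix (Fin 2) (Fin 2) ℂ,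
      (∀ x y, (G x y).PosSemidef) ∧
      (∑ x : Bool, ∑ y : Bool, G x y) = 1 ∧
      (∀ x, G x true + G x false = ubObs a₁ x) ∧
      (∀ y, G true y + G false y = ubObs a₂ y) :=
  stmt0_general a₁ a₂ h
end

section
/- For t ∈ (1/√2, 1] and unit vector n = (n_x, n_y, n_z) ∈ ℝ³, the pair {A^{tx}, A^{ty}} of unbiased qubit observables is incompatible on the plane with normal n (S₀^(R)-incompatible) if and only if |P_R(t x + t y)| + |P_R(t x − t y)| > 2, where P_R is the projection onto that plane; since |P_R(x+y)|² = 2 − (n_x + n_y)² and |P_R(x−y)|² = 2 − (n_x − n_y)², this is equivalent to t(√(2 − (n_x+n_y)²) + √(2 − (n_x−n_y)²)) > 2. -/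
open Matrix ComplexOrder Real

/-- The qubit state with Bloch vector `s`. -/
noncomputable def qubitState (s : EuclideanSpace ℝ (Fin 3)) : Matrix (Fin 2) (Fin 2) ℂ :=
  (1/2 : ℂ) • ((1 : Matrix (Fin 2) (Fin 2) ℂ) + dotSigma s)

/-- A pair of binary POVMs is compatible if it admits a joint POVM. -/
def PairCompatible (A B : Bool → Matrix (Fin 2) (Fin 2) ℂ) : Prop :=
  ∃ G : Bool → Bool → Matrix (Fin 2) (Fin 2) ℂ,
    (∀ x y, (G x y).PosSemidef) ∧
    (∑ x : Bool, ∑ y : Bool, G x y) = 1 ∧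
    (∀ x, G x true + G x false = A x) ∧
    (∀ y, G true y + G false y = B y)

/-- `S₀^(R)`-compatibility of a pair of unbiased qubit observables, where `R` is the
disk of Bloch vectors orthogonal to the unit normal `nv`. -/
def SRCompatible (nv a₁ a₂ : EuclideanSpace ℝ (Fin 3)) : Prop :=
  ∃ B₁ B₂ : Bool → Matrix (Fin 2) (Fin 2) ℂ, PairCompatible B₁ B₂ ∧
    ∀ s : EuclideanSpace ℝ (Fin 3), ‖s‖ ≤ 1 → (inner ℝ s nv : ℝ) = 0 →
      (∀ x, (qubitState s * B₁ x).trace = (qubitState s * ubObs a₁ x).trace) ∧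
      (∀ x, (qubitState s * B₂ x).trace = (qubitState s * ubObs a₂ x).trace)

/-- The vector `(v₀, v₁, v₂)` in Euclidean `ℝ³`. -/
noncomputable def e3 (v : Fin 3 → ℝ) : EuclideanSpace ℝ (Fin 3) :=
  (WithLp.equiv 2 (Fin 3 → ℝ)).symm v

/-! ### Auxiliary machinery -/

/-- The hermitian matrix `β·1 + p σx + q σy + r σz` written out explicitly. -/
noncomputable def bM (β p q r : ℝ) : Matrix (Fin 2) (Fin 2) ℂ :=
  !![(β:ℂ)+r, (p:ℂ) - q*Complex.I; (p:ℂ) + q*Complex.I, (β:ℂ)-r]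

/-- `±1` sign attached to a boolean outcome. -/
noncomputable def sg (b : Bool) : ℝ := if b then 1 else -1

lemma bM_add (β p q r β' p' q' r' : ℝ) :
    bM β p q r + bM β' p' q' r' = bM (β+β') (p+p') (q+q') (r+r') := by
  ext i j; fin_cases i <;> fin_cases j <;> simp [bM] <;> ring

lemma bM_one : bM 1 0 0 0 = 1 := by
  ext i j; fin_cases i <;> fin_cases j <;> simp [bM, Matrix.one_apply]

lemma bM_congr {β p q r β' p' q' r' : ℝ} (h1 : β = β') (h2 : p = p') (h3 : q = q')
    (h4 : r = r') : bM β p q r = bM β' p' q' r' := by rw [h1, h2, h3, h4]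

lemma bM_inj {β p q r β' p' q' r' : ℝ} (h : bM β p q r = bM β' p' q' r') :
    β = β' ∧ p = p' ∧ q = q' ∧ r = r' := by
  have h00 := congrFun (congrFun h 0) 0
  have h11 := congrFun (congrFun h 1) 1
  have h10 := congrFun (congrFun h 1) 0
  simp [bM, Complex.ext_iff] at h00 h11 h10
  refine ⟨by linarith [h00, h11], h10.1, h10.2, by linarith [h00, h11]⟩

lemma bM_herm (β p q r : ℝ) : (bM β p q r).IsHermitian := by
  ext i j
  fin_cases i <;> fin_cases j <;>
    simp [bM, Matrix.conjTranspose_apply, Complex.ext_iff]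

lemma ubObs_eq_s15 (a : EuclideanSpace ℝ (Fin 3)) (b : Bool) :
    ubObs a b = bM (1/2) (sg b * a 0 / 2) (sg b * a 1 / 2) (sg b * a 2 / 2) := by
  cases b <;>
  · ext i j
    fin_cases i <;> fin_cases j <;>
      simp [ubObs, sg, bM, dotSigma, σx, σy, σz, Matrix.one_apply] <;> ring

lemma qubitState_eq (s : EuclideanSpace ℝ (Fin 3)) :
    qubitState s = (1/2 : ℂ) • bM 1 (s 0) (s 1) (s 2) := by
  ext i j
  fin_cases i <;> fin_cases j <;>
    simp [qubitState, bM, dotSigma, σx, σy, σz, Matrix.one_apply] <;> ring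

lemma trace_bM_mul (β p q r β' p' q' r' : ℝ) :
    ((bM β p q r) * (bM β' p' q' r')).trace
      = ((2*(β*β' + p*p' + q*q' + r*r') : ℝ) : ℂ) := by
  simp [bM, Matrix.trace_fin_two, Matrix.mul_apply, Fin.sum_univ_two, Complex.ext_iff]
  constructor <;> ring

lemma trace_qs (s : EuclideanSpace ℝ (Fin 3)) (β p q r : ℝ) :
    (qubitState s * bM β p q r).trace
      = ((β + (s 0 * p + s 1 * q + s 2 * r) : ℝ) : ℂ) := by
  rw [qubitState_eq, Matrix.smul_mul, Matrix.trace_smul, trace_bM_mul]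
  simp [smul_eq_mul]; push_cast; ring

lemma psd_bM {β p q r : ℝ} (hβ : 0 ≤ β) (h : p^2+q^2+r^2 ≤ β^2) :
    (bM β p q r).PosSemidef := by
  refine Matrix.PosSemidef.of_dotProduct_mulVec_nonneg (bM_herm β p q r) fun x => ?_
  have hform : star x ⬝ᵥ (bM β p q r).mulVec x =
      (((β+r)*((x 0).re^2+(x 0).im^2) + (β-r)*((x 1).re^2+(x 1).im^2)
        + 2*p*((x 0).re*(x 1).re + (x 0).im*(x 1).im)
        + 2*q*((x 0).re*(x 1).im - (x 0).im*(x 1).re) : ℝ) : ℂ) := by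
    simp [dotProduct, Matrix.mulVec, Fin.sum_univ_two, bM, Complex.ext_iff,
      ← Complex.ofReal_pow, Complex.add_re, Complex.add_im, Complex.mul_re, Complex.mul_im]
    constructor <;> ring
  rw [hform]
  rw [Complex.zero_le_real]
  set a := (x 0).re; set b := (x 0).im; set c := (x 1).re; set d := (x 1).im
  rcases eq_or_lt_of_le hβ with hb | hb
  · have hp : p = 0 := by nlinarith [sq_nonneg p, sq_nonneg q, sq_nonneg r]
    have hq : q = 0 := by nlinarith [sq_nonneg p, sq_nonneg q, sq_nonneg r]
    have hr : r = 0 := by nlinarith [sq_nonneg p, sq_nonneg q, sq_nonneg r]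
    simp [← hb, hp, hq, hr]
  · nlinarith [sq_nonneg ((β+r)*a + p*c + q*d), sq_nonneg ((β+r)*b + p*d - q*c),
      sq_nonneg ((β-r)*c + p*a - q*b), sq_nonneg ((β-r)*d + p*b + q*a),
      mul_nonneg (mul_nonneg (sub_nonneg.2 h) (sq_nonneg c)) hb.le,
      mul_nonneg (sub_nonneg.2 h) (add_nonneg (sq_nonneg c) (sq_nonneg d)),
      mul_nonneg (sub_nonneg.2 h) (add_nonneg (sq_nonneg a) (sq_nonneg b)),
      sq_nonneg (a*c+b*d), sq_nonneg (a*d-b*c), hb]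

lemma psd_decomp {M : Matrix (Fin 2) (Fin 2) ℂ} (hM : M.PosSemidef) :
    ∃ β p q r : ℝ, M = bM β p q r ∧ 0 ≤ β ∧ p^2+q^2+r^2 ≤ β^2 := by
  have hH := hM.1
  have h00 : M 0 0 = ((M 0 0).re : ℂ) := by
    have := congrFun (congrFun hH 0) 0
    simp [Matrix.conjTranspose_apply] at this
    have him : (M 0 0).im = 0 := by
      have := congrArg Complex.im this; simp at this; linarith
    exact Complex.ext rfl (by simp [him])
  have h11 : M 1 1 = ((M 1 1).re : ℂ) := by
    have := congrFun (congrFun hH 1) 1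
    simp [Matrix.conjTranspose_apply] at this
    have him : (M 1 1).im = 0 := by
      have := congrArg Complex.im this; simp at this; linarith
    exact Complex.ext rfl (by simp [him])
  have h10 : M 1 0 = (starRingEnd ℂ) (M 0 1) := by
    have := congrFun (congrFun hH 1) 0
    simpa [Matrix.conjTranspose_apply] using this.symm
  refine ⟨((M 0 0).re + (M 1 1).re)/2, (M 0 1).re, -(M 0 1).im,
    ((M 0 0).re - (M 1 1).re)/2, ?_, ?_, ?_⟩
  · rw [Matrix.eta_fin_two M, h00, h11, h10]
    ext i j
    fin_cases i <;> fin_cases j <;> simp [bM] <;>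
      try ring
    all_goals exact Complex.ext (by simp) (by simp)
  · have e0 := hM.dotProduct_mulVec_nonneg ![1,0]
    have e1 := hM.dotProduct_mulVec_nonneg ![0,1]
    simp [dotProduct, Matrix.mulVec, Fin.sum_univ_two] at e0 e1
    rw [h00, Complex.zero_le_real] at e0
    rw [h11, Complex.zero_le_real] at e1
    linarith
  · have hdet : M.det = ((hH.eigenvalues 0 * hH.eigenvalues 1 : ℝ) : ℂ) := by
      rw [hH.det_eq_prod_eigenvalues]
      simp [Fin.prod_univ_two]
    have hd2 : M.det = M 0 0 * M 1 1 - M 0 1 * M 1 0 := by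
      simp [Matrix.det_fin_two]
    have hnn : 0 ≤ hH.eigenvalues 0 * hH.eigenvalues 1 :=
      mul_nonneg (hM.eigenvalues_nonneg 0) (hM.eigenvalues_nonneg 1)
    have key : M 0 0 * M 1 1 - M 0 1 * M 1 0
        = ((hH.eigenvalues 0 * hH.eigenvalues 1 : ℝ) : ℂ) := by
      rw [← hd2, hdet]
    rw [h00, h11, h10] at key
    have kre := congrArg Complex.re key
    simp [Complex.mul_re, Complex.sub_re] at kre
    nlinarith [Complex.sq_norm (M 0 1), hnn, kre]

lemma cs3 {s0 s1 s2 g0 g1 g2 β : ℝ} (hs : s0^2+s1^2+s2^2 ≤ 1)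
    (hg : g0^2+g1^2+g2^2 ≤ β^2) (hβ : 0 ≤ β) : s0*g0+s1*g1+s2*g2 ≤ β := by
  nlinarith [sq_nonneg (s0*g1-s1*g0), sq_nonneg (s0*g2-s2*g0), sq_nonneg (s1*g2-s2*g1),
    sq_nonneg (s0*g0+s1*g1+s2*g2+β), sq_nonneg (s0*g0+s1*g1+s2*g2),
    sq_nonneg g0, sq_nonneg g1, sq_nonneg g2]

lemma norm3_le {s : EuclideanSpace ℝ (Fin 3)} (h : ‖s‖ ≤ 1) :
    s 0^2 + s 1^2 + s 2^2 ≤ 1 := by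
  rw [EuclideanSpace.norm_eq] at h
  simp only [Real.norm_eq_abs, sq_abs, Fin.sum_univ_three] at h
  have h0 : (0:ℝ) ≤ s 0^2 + s 1^2 + s 2^2 := by positivity
  nlinarith [Real.sq_sqrt h0, Real.sqrt_nonneg (s 0^2 + s 1^2 + s 2^2)]

set_option maxHeartbeats 1000000 in
/-- The pair `{A^{tx}, A^{ty}}` is `S₀^(R)`-incompatible for the plane with unit
normal `n` iff `t(√(2 − (n_x+n_y)²) + √(2 − (n_x−n_y)²)) > 2`. -/
theorem stmt15 (t : ℝ) (ht : 1 / Real.sqrt 2 < t) (ht1 : t ≤ 1)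
    (nv : EuclideanSpace ℝ (Fin 3)) (hn : ‖nv‖ = 1) :
    ¬ SRCompatible nv (t • e3 ![1,0,0]) (t • e3 ![0,1,0]) ↔
      t * (Real.sqrt (2 - (nv 0 + nv 1)^2) + Real.sqrt (2 - (nv 0 - nv 1)^2)) > 2 := by
  have ht0 : 0 < t := lt_trans (by positivity) ht
  have hnorm : nv 0^2 + nv 1^2 + nv 2^2 = 1 := by
    have h2 : ‖nv‖^2 = 1 := by rw [hn]; norm_num
    rw [EuclideanSpace.norm_eq] at h2
    rw [Real.sq_sqrt (by positivity)] at h2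
    simp [Fin.sum_univ_three, Real.norm_eq_abs, sq_abs] at h2
    linarith
  have hA0 : (0:ℝ) ≤ 2 - (nv 0 + nv 1)^2 := by
    nlinarith [sq_nonneg (nv 0 - nv 1), sq_nonneg (nv 2)]
  have hB0 : (0:ℝ) ≤ 2 - (nv 0 - nv 1)^2 := by
    nlinarith [sq_nonneg (nv 0 + nv 1), sq_nonneg (nv 2)]
  have hub1 : ∀ x, ubObs (t • e3 ![1,0,0]) x = bM (1/2) (sg x * t/2) 0 0 := by
    intro x; rw [ubObs_eq_s15]; apply bM_congr <;> simp [e3]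
  have hub2 : ∀ x, ubObs (t • e3 ![0,1,0]) x = bM (1/2) 0 (sg x * t/2) 0 := by
    intro x; rw [ubObs_eq_s15]; apply bM_congr <;> simp [e3]
  -- Part 1 : the construction (criterion ≤ 2 implies compatibility)
  have hcompat : t * (Real.sqrt (2 - (nv 0 + nv 1)^2) + Real.sqrt (2 - (nv 0 - nv 1)^2)) ≤ 2 →
      SRCompatible nv (t • e3 ![1,0,0]) (t • e3 ![0,1,0]) := by
    intro hc
    obtain ⟨b10, hb10⟩ : ∃ x : ℝ, x = t*(1 - nv 0^2) := ⟨_, rfl⟩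
    obtain ⟨b11, hb11⟩ : ∃ x : ℝ, x = -(t*(nv 0*nv 1)) := ⟨_, rfl⟩
    obtain ⟨b12, hb12⟩ : ∃ x : ℝ, x = -(t*(nv 0*nv 2)) := ⟨_, rfl⟩
    obtain ⟨b20, hb20⟩ : ∃ x : ℝ, x = -(t*(nv 0*nv 1)) := ⟨_, rfl⟩
    obtain ⟨b21, hb21⟩ : ∃ x : ℝ, x = t*(1 - nv 1^2) := ⟨_, rfl⟩
    obtain ⟨b22, hb22⟩ : ∃ x : ℝ, x = -(t*(nv 1*nv 2)) := ⟨_, rfl⟩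
    obtain ⟨U, hUdef⟩ : ∃ x : ℝ, x = t * Real.sqrt (2 - (nv 0 + nv 1)^2) := ⟨_, rfl⟩
    obtain ⟨V, hVdef⟩ : ∃ x : ℝ, x = t * Real.sqrt (2 - (nv 0 - nv 1)^2) := ⟨_, rfl⟩
    obtain ⟨l, hldef⟩ : ∃ x : ℝ, x = (U - V)/2 := ⟨_, rfl⟩
    have hU : 0 ≤ U := by rw [hUdef]; exact mul_nonneg ht0.le (Real.sqrt_nonneg _)
    have hV : 0 ≤ V := by rw [hVdef]; exact mul_nonneg ht0.le (Real.sqrt_nonneg _)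
    have hUV : U + V ≤ 2 := by
      have : U + V = t * (Real.sqrt (2 - (nv 0 + nv 1)^2) + Real.sqrt (2 - (nv 0 - nv 1)^2)) := by
        rw [hUdef, hVdef]; ring
      linarith
    have hU2 : (b10+b20)^2 + (b11+b21)^2 + (b12+b22)^2 = U^2 := by
      have hq : U^2 = t^2*(2 - (nv 0 + nv 1)^2) := by
        rw [hUdef, mul_pow, Real.sq_sqrt hA0]
        
      rw [hb10, hb11, hb12, hb20, hb21, hb22]
      linear_combination (t^2*(nv 0 + nv 1)^2) * hnorm - hq
    have hV2 : (b10-b20)^2 + (b11-b21)^2 + (b12-b22)^2 = V^2 := by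
      have hq : V^2 = t^2*(2 - (nv 0 - nv 1)^2) := by
        rw [hVdef, mul_pow, Real.sq_sqrt hB0]
      rw [hb10, hb11, hb12, hb20, hb21, hb22]
      linear_combination (t^2*(nv 0 - nv 1)^2) * hnorm - hq
    have hU1 : U ≤ 1 + l := by rw [hldef]; linarith
    have hV1 : V ≤ 1 - l := by rw [hldef]; linarith
    have hl1 : 0 ≤ 1 + l := by rw [hldef]; linarith
    have hl2 : 0 ≤ 1 - l := by rw [hldef]; linarith
    have hUsq : U^2 ≤ (1+l)^2 := by nlinarith
    have hVsq : V^2 ≤ (1-l)^2 := by nlinarith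
    refine ⟨fun x => bM (1/2) (sg x*b10/2) (sg x*b11/2) (sg x*b12/2),
      fun y => bM (1/2) (sg y*b20/2) (sg y*b21/2) (sg y*b22/2),
      ⟨fun x y => bM ((1 + sg x*sg y*l)/4) ((sg x*b10 + sg y*b20)/4)
        ((sg x*b11 + sg y*b21)/4) ((sg x*b12 + sg y*b22)/4), ?_, ?_, ?_, ?_⟩, ?_⟩
    · intro x y
      cases x <;> cases y
      · exact psd_bM (by norm_num [sg]; linarith) (by norm_num [sg]; nlinarith [hU2, hUsq])
      · exact psd_bM (by norm_num [sg]; linarith) (by norm_num [sg]; nlinarith [hV2, hVsq])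
      · exact psd_bM (by norm_num [sg]; linarith) (by norm_num [sg]; nlinarith [hV2, hVsq])
      · exact psd_bM (by norm_num [sg]; linarith) (by norm_num [sg]; nlinarith [hU2, hUsq])
    · simp only [Fintype.sum_bool]
      rw [bM_add, bM_add, bM_add, ← bM_one]
      apply bM_congr <;> norm_num [sg] <;> ring
    · intro x
      cases x <;> (rw [bM_add]; apply bM_congr <;> norm_num [sg] <;> ring)
    · intro y
      cases y <;> (rw [bM_add]; apply bM_congr <;> norm_num [sg] <;> ring)
    · intro s hs1 hs2
      have hplane : s 0 * nv 0 + s 1 * nv 1 + s 2 * nv 2 = 0 := by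
        simp [PiLp.inner_apply, Fin.sum_univ_three] at hs2; linarith
      constructor <;> intro x
      · rw [trace_qs, hub1 x, trace_qs]
        congr 1
        rw [hb10, hb11, hb12]
        cases x <;> norm_num [sg] <;>
          first
            | linear_combination (t*nv 0) * hplane
            | linear_combination (-(t*nv 0)) * hplane
            | linear_combination ((t*nv 0)/2) * hplane
            | linear_combination (-(t*nv 0)/2) * hplane
      · rw [trace_qs, hub2 x, trace_qs]
        congr 1
        rw [hb20, hb21, hb22]
        cases x <;> norm_num [sg] <;>
          first
            | linear_combination (t*nv 1) * hplane
            | linear_combination (-(t*nv 1)) * hplane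
            | linear_combination ((t*nv 1)/2) * hplane
            | linear_combination (-(t*nv 1)/2) * hplane
  -- Part 2 : compatibility implies criterion ≤ 2
  have hbound : SRCompatible nv (t • e3 ![1,0,0]) (t • e3 ![0,1,0]) →
      t * (Real.sqrt (2 - (nv 0 + nv 1)^2) + Real.sqrt (2 - (nv 0 - nv 1)^2)) ≤ 2 := by
    rintro ⟨B₁, B₂, ⟨G, hpsd, hsum, hm1, hm2⟩, hst⟩
    choose γ p q r hGeq hγ hlen using fun x y => psd_decomp (hpsd x y)
    have hs' : (G true true + G true false) + (G false true + G false false) = 1 := by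
      simpa [Fintype.sum_bool] using hsum
    rw [hGeq, hGeq, hGeq, hGeq, bM_add, bM_add, bM_add, ← bM_one] at hs'
    obtain ⟨e1, e2, e3', e4⟩ := bM_inj hs'
    have key : ∀ s : EuclideanSpace ℝ (Fin 3), ‖s‖ ≤ 1 → (inner ℝ s nv : ℝ) = 0 →
        ((γ true true + γ true false)
          + (s 0*(p true true + p true false) + s 1*(q true true + q true false)
            + s 2*(r true true + r true false)) = 1/2 + s 0 * (t/2)) ∧
        ((γ true true + γ false true)
          + (s 0*(p true true + p false true) + s 1*(q true true + q false true)
            + s 2*(r true true + r false true)) = 1/2 + s 1 * (t/2)) := by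
      intro s h1 h2
      obtain ⟨c1, c2⟩ := hst s h1 h2
      have k1 := c1 true
      have k2 := c2 true
      rw [← hm1 true, hGeq, hGeq, bM_add, trace_qs, hub1 true, trace_qs] at k1
      rw [← hm2 true, hGeq, hGeq, bM_add, trace_qs, hub2 true, trace_qs] at k2
      have k1' := Complex.ofReal_inj.mp k1
      have k2' := Complex.ofReal_inj.mp k2
      norm_num [sg] at k1' k2'
      constructor <;> linarith
    have hzn : ‖(0 : EuclideanSpace ℝ (Fin 3))‖ ≤ 1 := by simp
    have hzi : (inner ℝ (0 : EuclideanSpace ℝ (Fin 3)) nv : ℝ) = 0 := by simp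
    have k0 := key 0 hzn hzi
    simp only [show (0 : EuclideanSpace ℝ (Fin 3)) 0 = 0 from rfl,
      show (0 : EuclideanSpace ℝ (Fin 3)) 1 = 0 from rfl,
      show (0 : EuclideanSpace ℝ (Fin 3)) 2 = 0 from rfl] at k0
    obtain ⟨g1, g2⟩ := k0
    -- pick the extremal plane vectors
    have hs_plus : ∃ s : EuclideanSpace ℝ (Fin 3), ‖s‖ ≤ 1 ∧ (inner ℝ s nv : ℝ) = 0 ∧
        s 0 + s 1 = Real.sqrt (2 - (nv 0 + nv 1)^2) := by
      by_cases hA : 2 - (nv 0 + nv 1)^2 = 0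
      · exact ⟨0, by simp, by simp, by rw [hA]; simp⟩
      · have hApos : 0 < 2 - (nv 0 + nv 1)^2 := lt_of_le_of_ne hA0 (Ne.symm hA)
        set sA := Real.sqrt (2 - (nv 0 + nv 1)^2) with hsAdef
        have hsA : 0 < sA := Real.sqrt_pos.2 hApos
        have hsA2 : sA^2 = 2 - (nv 0 + nv 1)^2 := Real.sq_sqrt hA0
        refine ⟨e3 ![(1 - nv 0*(nv 0 + nv 1))/sA, (1 - nv 1*(nv 0 + nv 1))/sA,
          (-(nv 2*(nv 0 + nv 1)))/sA], ?_, ?_, ?_⟩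
        · rw [EuclideanSpace.norm_eq]
          simp only [Real.norm_eq_abs, sq_abs, Fin.sum_univ_three]
          have hw : (1 - nv 0*(nv 0 + nv 1))^2 + (1 - nv 1*(nv 0 + nv 1))^2
              + (-(nv 2*(nv 0 + nv 1)))^2 = sA^2 := by
            rw [hsA2]; linear_combination ((nv 0 + nv 1)^2) * hnorm
          have hsum1 : ((1 - nv 0*(nv 0 + nv 1))/sA)^2 + ((1 - nv 1*(nv 0 + nv 1))/sA)^2
              + ((-(nv 2*(nv 0 + nv 1)))/sA)^2 = 1 := by
            rw [div_pow, div_pow, div_pow, ← add_div, ← add_div, hw]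
            exact div_self (pow_ne_zero 2 hsA.ne')
          simp only [e3, WithLp.equiv_symm_apply, WithLp.ofLp_toLp]
          rw [show ((![(1 - nv 0*(nv 0 + nv 1))/sA, (1 - nv 1*(nv 0 + nv 1))/sA,
            (-(nv 2*(nv 0 + nv 1)))/sA] : Fin 3 → ℝ) 0) = (1 - nv 0*(nv 0 + nv 1))/sA from rfl]
          rw [show ((![(1 - nv 0*(nv 0 + nv 1))/sA, (1 - nv 1*(nv 0 + nv 1))/sA,
            (-(nv 2*(nv 0 + nv 1)))/sA] : Fin 3 → ℝ) 1) = (1 - nv 1*(nv 0 + nv 1))/sA from rfl]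
          rw [show ((![(1 - nv 0*(nv 0 + nv 1))/sA, (1 - nv 1*(nv 0 + nv 1))/sA,
            (-(nv 2*(nv 0 + nv 1)))/sA] : Fin 3 → ℝ) 2) = (-(nv 2*(nv 0 + nv 1)))/sA from rfl]
          rw [hsum1, Real.sqrt_one]
        · simp only [PiLp.inner_apply, Fin.sum_univ_three, RCLike.inner_apply,
            starRingEnd_apply, star_trivial, e3, WithLp.equiv_symm_apply, WithLp.ofLp_toLp]
          show nv 0 * ((1 - nv 0*(nv 0 + nv 1))/sA) + nv 1 * ((1 - nv 1*(nv 0 + nv 1))/sA) + nv 2 * ((-(nv 2*(nv 0 + nv 1)))/sA) = 0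
          rw [mul_comm (nv 0) ((1 - nv 0*(nv 0 + nv 1))/sA), mul_comm (nv 1) ((1 - nv 1*(nv 0 + nv 1))/sA), mul_comm (nv 2) ((-(nv 2*(nv 0 + nv 1)))/sA)]
          show (1 - nv 0*(nv 0 + nv 1))/sA * nv 0 + (1 - nv 1*(nv 0 + nv 1))/sA * nv 1
            + (-(nv 2*(nv 0 + nv 1)))/sA * nv 2 = 0
          have hwn : (1 - nv 0*(nv 0 + nv 1))*nv 0 + (1 - nv 1*(nv 0 + nv 1))*nv 1
              + (-(nv 2*(nv 0 + nv 1)))*nv 2 = 0 := by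
            linear_combination (-(nv 0 + nv 1)) * hnorm
          rw [div_mul_eq_mul_div, div_mul_eq_mul_div, div_mul_eq_mul_div,
            ← add_div, ← add_div, hwn, zero_div]
        · show (1 - nv 0*(nv 0 + nv 1))/sA + (1 - nv 1*(nv 0 + nv 1))/sA = sA
          rw [← add_div]
          rw [show 1 - nv 0*(nv 0 + nv 1) + (1 - nv 1*(nv 0 + nv 1)) = sA^2 by
            rw [hsA2]; ring]
          rw [pow_two, mul_div_assoc, div_self hsA.ne', mul_one]
    have hs_minus : ∃ s : EuclideanSpace ℝ (Fin 3), ‖s‖ ≤ 1 ∧ (inner ℝ s nv : ℝ) = 0 ∧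
        s 0 - s 1 = Real.sqrt (2 - (nv 0 - nv 1)^2) := by
      by_cases hB : 2 - (nv 0 - nv 1)^2 = 0
      · exact ⟨0, by simp, by simp, by rw [hB]; simp⟩
      · have hBpos : 0 < 2 - (nv 0 - nv 1)^2 := lt_of_le_of_ne hB0 (Ne.symm hB)
        set sB := Real.sqrt (2 - (nv 0 - nv 1)^2) with hsBdef
        have hsB : 0 < sB := Real.sqrt_pos.2 hBpos
        have hsB2 : sB^2 = 2 - (nv 0 - nv 1)^2 := Real.sq_sqrt hB0
        refine ⟨e3 ![(1 - nv 0*(nv 0 - nv 1))/sB, (-1 - nv 1*(nv 0 - nv 1))/sB,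
          (-(nv 2*(nv 0 - nv 1)))/sB], ?_, ?_, ?_⟩
        · rw [EuclideanSpace.norm_eq]
          simp only [Real.norm_eq_abs, sq_abs, Fin.sum_univ_three]
          have hw : (1 - nv 0*(nv 0 - nv 1))^2 + (-1 - nv 1*(nv 0 - nv 1))^2
              + (-(nv 2*(nv 0 - nv 1)))^2 = sB^2 := by
            rw [hsB2]; linear_combination ((nv 0 - nv 1)^2) * hnorm
          have hsum1 : ((1 - nv 0*(nv 0 - nv 1))/sB)^2 + ((-1 - nv 1*(nv 0 - nv 1))/sB)^2
              + ((-(nv 2*(nv 0 - nv 1)))/sB)^2 = 1 := by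
            rw [div_pow, div_pow, div_pow, ← add_div, ← add_div, hw]
            exact div_self (pow_ne_zero 2 hsB.ne')
          simp only [e3, WithLp.equiv_symm_apply, WithLp.ofLp_toLp]
          rw [show ((![(1 - nv 0*(nv 0 - nv 1))/sB, (-1 - nv 1*(nv 0 - nv 1))/sB,
            (-(nv 2*(nv 0 - nv 1)))/sB] : Fin 3 → ℝ) 0) = (1 - nv 0*(nv 0 - nv 1))/sB from rfl]
          rw [show ((![(1 - nv 0*(nv 0 - nv 1))/sB, (-1 - nv 1*(nv 0 - nv 1))/sB,
            (-(nv 2*(nv 0 - nv 1)))/sB] : Fin 3 → ℝ) 1) = (-1 - nv 1*(nv 0 - nv 1))/sB from rfl]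
          rw [show ((![(1 - nv 0*(nv 0 - nv 1))/sB, (-1 - nv 1*(nv 0 - nv 1))/sB,
            (-(nv 2*(nv 0 - nv 1)))/sB] : Fin 3 → ℝ) 2) = (-(nv 2*(nv 0 - nv 1)))/sB from rfl]
          rw [hsum1, Real.sqrt_one]
        · simp only [PiLp.inner_apply, Fin.sum_univ_three, RCLike.inner_apply,
            starRingEnd_apply, star_trivial, e3, WithLp.equiv_symm_apply, WithLp.ofLp_toLp]
          show nv 0 * ((1 - nv 0*(nv 0 - nv 1))/sB) + nv 1 * ((-1 - nv 1*(nv 0 - nv 1))/sB) + nv 2 * ((-(nv 2*(nv 0 - nv 1)))/sB) = 0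
          rw [mul_comm (nv 0) ((1 - nv 0*(nv 0 - nv 1))/sB), mul_comm (nv 1) ((-1 - nv 1*(nv 0 - nv 1))/sB), mul_comm (nv 2) ((-(nv 2*(nv 0 - nv 1)))/sB)]
          show (1 - nv 0*(nv 0 - nv 1))/sB * nv 0 + (-1 - nv 1*(nv 0 - nv 1))/sB * nv 1
            + (-(nv 2*(nv 0 - nv 1)))/sB * nv 2 = 0
          have hwn : (1 - nv 0*(nv 0 - nv 1))*nv 0 + (-1 - nv 1*(nv 0 - nv 1))*nv 1
              + (-(nv 2*(nv 0 - nv 1)))*nv 2 = 0 := by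
            linear_combination (-(nv 0 - nv 1)) * hnorm
          rw [div_mul_eq_mul_div, div_mul_eq_mul_div, div_mul_eq_mul_div,
            ← add_div, ← add_div, hwn, zero_div]
        · show (1 - nv 0*(nv 0 - nv 1))/sB - (-1 - nv 1*(nv 0 - nv 1))/sB = sB
          rw [← sub_div]
          rw [show 1 - nv 0*(nv 0 - nv 1) - (-1 - nv 1*(nv 0 - nv 1)) = sB^2 by
            rw [hsB2]; ring]
          rw [pow_two, mul_div_assoc, div_self hsB.ne', mul_one]
    obtain ⟨s, hsn, hsi, hsval⟩ := hs_plus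
    obtain ⟨s', hsn', hsi', hsval'⟩ := hs_minus
    obtain ⟨K1, K2⟩ := key s hsn hsi
    obtain ⟨K1', K2'⟩ := key s' hsn' hsi'
    have hns := norm3_le hsn
    have hns' := norm3_le hsn'
    have c_tt := cs3 hns (hlen true true) (hγ true true)
    have c_ff := cs3 (show (-(s 0))^2 + (-(s 1))^2 + (-(s 2))^2 ≤ 1 by
      simpa [neg_sq] using hns) (hlen false false) (hγ false false)
    have c_tf := cs3 hns' (hlen true false) (hγ true false)
    have c_ft := cs3 (show (-(s' 0))^2 + (-(s' 1))^2 + (-(s' 2))^2 ≤ 1 by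
      simpa [neg_sq] using hns') (hlen false true) (hγ false true)
    -- dot products of the component-sum equations
    have d_s : s 0*(p true true + p true false + (p false true + p false false))
        + s 1*(q true true + q true false + (q false true + q false false))
        + s 2*(r true true + r true false + (r false true + r false false)) = 0 := by
      rw [e2, e3', e4]; ring
    have d_s' : s' 0*(p true true + p true false + (p false true + p false false))
        + s' 1*(q true true + q true false + (q false true + q false false))
        + s' 2*(r true true + r true false + (r false true + r false false)) = 0 := by
      rw [e2, e3', e4]; ring
    have hmulA : t * (s 0 + s 1) = t * Real.sqrt (2 - (nv 0 + nv 1)^2) := by rw [hsval]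
    have hmulB : t * (s' 0 - s' 1) = t * Real.sqrt (2 - (nv 0 - nv 1)^2) := by rw [hsval']
    linarith [K1, K2, K1', K2', g1, g2, c_tt, c_ff, c_tf, c_ft, d_s, d_s', hmulA, hmulB, e1]
  constructor
  · intro hns
    by_contra hcon
    push_neg at hcon
    exact hns (hcompat hcon)
  · intro hcrit hSR
    have := hbound hSR
    linarith
end

section
/- Let A = {A₁,…,Aₙ} be POVMs with outcome set X and S₀ = {ρ₁,…,ρ_m} states. The family A is S₀-compatible if and only if there exist a POVM M = {M(z)}_z and conditional probability distributions h(·|i,z) on X such that Tr[ρ_j A_i(x)] = Σ_z Tr[ρ_j M(z)] h(x|i,z) for all x, i, j. -/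
open Matrix ComplexOrder

/-- A POVM on a finite outcome set. -/
def IsPOVM {d Z : Type} [Fintype d] [DecidableEq d] [Fintype Z] (M : Z → Matrix d d ℂ) : Prop :=
  (∀ z, (M z).PosSemidef) ∧ ∑ z, M z = 1

/-- A family of `n` POVMs with common outcome set `X` is compatible if it admits a
joint POVM on `Xⁿ` whose marginals are the members. -/
def Compatible {d X : Type} [Fintype d] [DecidableEq d] [Fintype X] [DecidableEq X] {n : ℕ}
    (A : Fin n → X → Matrix d d ℂ) : Prop :=
  ∃ G : (Fin n → X) → Matrix d d ℂ, IsPOVM G ∧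
    ∀ i x, A i x = ∑ f ∈ Finset.univ.filter (fun f : Fin n → X => f i = x), G f

/-! A joint POVM on `Xⁿ` has the single-outcome marginals as deterministic post-processings, so
compatibility gives a CC-realization. Conversely, post-processing a POVM `M` with the product
kernel `(x₁,…,xₙ) ↦ ∏ᵢ h(xᵢ|i,z)` yields a joint POVM whose marginals are the post-processings
`∑_z h(x|i,z) M(z)`, which have the prescribed statistics. -/

open Finset

section ProductKernel

variable {ι X R : Type*} [Fintype ι] [DecidableEq ι] [Fintype X] [CommSemiring R]

theorem sum_filter_apply_eq_prod [DecidableEq X] (p : ι → X → R) (i : ι) (x : X) :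
    ∑ f ∈ univ.filter (fun f : ι → X => f i = x), ∏ k, p k (f k) =
      p i x * ∏ k ∈ univ.erase i, ∑ y, p k y := by
  -- zero out the factor `p i y` for `y ≠ x`, so that the filter becomes part of the product
  set q : ι → X → R := fun k y => if k = i ∧ y ≠ x then 0 else p k y
  have hq : ∀ f : ι → X, ∏ k, q k (f k) = if f i = x then ∏ k, p k (f k) else 0 := by
    intro f
    split_ifs with hf
    · exact prod_congr rfl fun k _ => if_neg fun ⟨hk, hy⟩ => hy (hk ▸ hf)
    · exact prod_eq_zero (mem_univ i) (if_pos ⟨rfl, hf⟩)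
  have hqi : ∑ y, q i y = p i x := by simp [q]
  rw [sum_filter, ← sum_congr rfl fun f _ => hq f, ← Fintype.prod_sum,
    ← mul_prod_erase univ _ (mem_univ i), hqi]
  congr 1
  exact prod_congr rfl fun k hk =>
    sum_congr rfl fun y _ => if_neg fun h => ne_of_mem_erase hk h.1

theorem sum_filter_apply_eq_of_sum_eq_one [DecidableEq X] (p : ι → X → R)
    (hp : ∀ k, ∑ y, p k y = 1) (i : ι) (x : X) :
    ∑ f ∈ univ.filter (fun f : ι → X => f i = x), ∏ k, p k (f k) = p i x := by
  simp [sum_filter_apply_eq_prod, hp]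

theorem sum_prod_eq_one_of_sum_eq_one (p : ι → X → R) (hp : ∀ k, ∑ y, p k y = 1) :
    ∑ f : ι → X, ∏ k, p k (f k) = 1 := by
  simp [← Fintype.prod_sum, hp]

end ProductKernel

section Postprocess

variable {d Y Z : Type} [Fintype d] [DecidableEq d] [Fintype Z]

def postprocess (M : Z → Matrix d d ℂ) (w : Y → Z → ℝ) (y : Y) : Matrix d d ℂ :=
  ∑ z, (w y z : ℂ) • M z

theorem IsPOVM.postprocess [Fintype Y] {M : Z → Matrix d d ℂ} (hM : IsPOVM M) {w : Y → Z → ℝ}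
    (hw_nonneg : ∀ y z, 0 ≤ w y z) (hw_sum : ∀ z, ∑ y, w y z = 1) :
    IsPOVM (postprocess M w) := by
  refine ⟨fun y => posSemidef_sum _ fun z _ =>
    (hM.1 z).smul (Complex.zero_le_real.mpr (hw_nonneg y z)), ?_⟩
  simp only [_root_.postprocess]
  rw [sum_comm]
  simp [← sum_smul, hw_sum, hM.2]

theorem trace_mul_postprocess (ρ : Matrix d d ℂ) (M : Z → Matrix d d ℂ) (w : Y → Z → ℝ) (y : Y) :
    (ρ * postprocess M w y).trace = ∑ z, (ρ * M z).trace * (w y z : ℂ) := by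
  simp [postprocess, mul_sum, trace_sum, mul_comm]

end Postprocess

theorem compatible_postprocess {d X Z : Type} [Fintype d] [DecidableEq d] [Fintype X]
    [DecidableEq X] [Fintype Z] {n : ℕ} {M : Z → Matrix d d ℂ} (hM : IsPOVM M)
    {h : X → Fin n → Z → ℝ} (h_nonneg : ∀ x i z, 0 ≤ h x i z) (h_sum : ∀ i z, ∑ x, h x i z = 1) :
    Compatible fun i => postprocess M fun x z => h x i z := by
  refine ⟨postprocess M fun f z => ∏ k, h (f k) k z,
    hM.postprocess (fun f z => prod_nonneg fun k _ => h_nonneg _ k z)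
      (fun z => sum_prod_eq_one_of_sum_eq_one (fun k x => h x k z) (h_sum · z)),
    fun i x => ?_⟩
  simp only [postprocess]
  rw [sum_comm]
  simp only [← sum_smul, ← Complex.ofReal_sum,
    sum_filter_apply_eq_of_sum_eq_one (fun k y => h y k _) (h_sum · _)]

theorem eq_postprocess_of_eq_sum_filter {d X : Type} [Fintype d] [DecidableEq d] [Fintype X]
    [DecidableEq X] {n : ℕ} {B : Fin n → X → Matrix d d ℂ} {G : (Fin n → X) → Matrix d d ℂ}
    (hBG : ∀ i x, B i x = ∑ f ∈ univ.filter (fun f : Fin n → X => f i = x), G f) (i : Fin n)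
    (x : X) : B i x = postprocess G (fun x f => if f i = x then 1 else 0) x := by
  simp [hBG, postprocess, sum_filter]

theorem stmt17_general {d X : Type} [Fintype d] [DecidableEq d] [Fintype X] [DecidableEq X]
    {n m : ℕ} (A : Fin n → X → Matrix d d ℂ)
    (ρ : Fin m → Matrix d d ℂ) :
    (∃ B : Fin n → X → Matrix d d ℂ, Compatible B ∧
      ∀ (j : Fin m) (i : Fin n) (x : X), (ρ j * B i x).trace = (ρ j * A i x).trace) ↔
    (∃ (Z : Type) (_ : Fintype Z) (_ : DecidableEq Z) (M : Z → Matrix d d ℂ)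
      (h : X → Fin n → Z → ℝ), IsPOVM M ∧
      (∀ x i z, 0 ≤ h x i z) ∧ (∀ i z, ∑ x : X, h x i z = 1) ∧
      ∀ (x : X) (i : Fin n) (j : Fin m),
        (ρ j * A i x).trace = ∑ z, (ρ j * M z).trace * (h x i z : ℂ)) := by
  constructor
  · rintro ⟨B, ⟨G, hG, hBG⟩, hBA⟩
    refine ⟨Fin n → X, inferInstance, inferInstance, G, fun x i f => if f i = x then 1 else 0,
      hG, fun x i f => by positivity, fun i f => by simp, fun x i j => ?_⟩
    rw [← hBA, eq_postprocess_of_eq_sum_filter hBG, trace_mul_postprocess]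
  · rintro ⟨Z, _, _, M, h, hM, h_nonneg, h_sum, hA⟩
    exact ⟨fun i => postprocess M fun x z => h x i z, compatible_postprocess hM h_nonneg h_sum,
      fun j i x => by rw [trace_mul_postprocess, hA]⟩

/-- `S₀`-compatibility and CC-realizability coincide: the family `A` is
`S₀`-compatible for `S₀ = {ρ₁,…,ρ_m}` iff there exist a POVM `M` and conditional
probability distributions `h(·|i,z)` reproducing the statistics of `A` on `S₀`. -/
theorem stmt17 {d X : Type} [Fintype d] [DecidableEq d] [Fintype X] [DecidableEq X]
    {n m : ℕ} (A : Fin n → X → Matrix d d ℂ) (hA : ∀ i, IsPOVM (A i))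
    (ρ : Fin m → Matrix d d ℂ) :
    (∃ B : Fin n → X → Matrix d d ℂ, Compatible B ∧
      ∀ (j : Fin m) (i : Fin n) (x : X), (ρ j * B i x).trace = (ρ j * A i x).trace) ↔
    (∃ (Z : Type) (_ : Fintype Z) (_ : DecidableEq Z) (M : Z → Matrix d d ℂ)
      (h : X → Fin n → Z → ℝ), IsPOVM M ∧
      (∀ x i z, 0 ≤ h x i z) ∧ (∀ i z, ∑ x : X, h x i z = 1) ∧
      ∀ (x : X) (i : Fin n) (j : Fin m),
        (ρ j * A i x).trace = ∑ z, (ρ j * M z).trace * (h x i z : ℂ)) :=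
  stmt17_general A ρ
end
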